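/- Let α, α' ∈ ℝ and let n, n' be distinct positive integers. Then the Lebesgue measure of the set {x ∈ [0,1] : cos(α + 2πnx)·cos(α' + 2πn'x) < 0} is at least 1/8. -/

import Mathlib

open scoped Real

open MeasureTheory intervalIntegral

-- product-to-sum
lemma cos_mul_cos' (x y : ℝ) :
    Real.cos x * Real.cos y = (Real.cos (x - y) + Real.cos (x + y)) / 2 := by
  rw [Real.cos_sub, Real.cos_add]; ring

-- oscillatory integral vanishes
lemma osc (c : ℝ) (k : ℤ) (hk : k ≠ 0) :
    ∫ x in (0:ℝ)..1, Real.cos (c + 2 * Real.pi * k * x) = 0 := by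
  have hk' : (2 * Real.pi * (k:ℝ)) ≠ 0 := by
    refine mul_ne_zero (by positivity) (Int.cast_ne_zero.mpr hk)
  have h1 : ∀ x : ℝ, Real.cos (c + 2 * Real.pi * k * x)
      = Real.cos (2 * Real.pi * (k:ℝ) * x + c) := by
    intro x; ring_nf
  rw [intervalIntegral.integral_congr (g := fun x => Real.cos (2 * Real.pi * (k:ℝ) * x + c))
    (fun x _ => h1 x)]
  rw [intervalIntegral.integral_comp_mul_add Real.cos hk' c]
  rw [integral_cos]
  have : Real.sin (2 * Real.pi * (k:ℝ) * 1 + c) = Real.sin (2 * Real.pi * (k:ℝ) * 0 + c) := by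
    have := Real.sin_add_int_mul_two_pi c k
    simp only [mul_zero, zero_add]
    rw [show 2 * Real.pi * (k:ℝ) * 1 + c = c + (k:ℝ) * (2 * Real.pi) by ring, this]
  rw [this, sub_self, smul_zero]

lemma cont_osc (c : ℝ) (k : ℤ) :
    IntervalIntegrable (fun x => Real.cos (c + 2 * Real.pi * k * x)) MeasureTheory.volume 0 1 :=
  (by fun_prop : Continuous fun x : ℝ => Real.cos (c + 2 * Real.pi * k * x)).intervalIntegrable 0 1

lemma int_h (α α' : ℝ) (k k' : ℤ) (h1 : k - k' ≠ 0) (h2 : k + k' ≠ 0) :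
    ∫ x in (0:ℝ)..1, Real.cos (α + 2*Real.pi*k*x) * Real.cos (α' + 2*Real.pi*k'*x) = 0 := by
  have key : ∀ x : ℝ, Real.cos (α + 2*Real.pi*k*x) * Real.cos (α' + 2*Real.pi*k'*x)
      = (1/2) * Real.cos ((α - α') + 2*Real.pi*((k - k' : ℤ))*x)
        + (1/2) * Real.cos ((α + α') + 2*Real.pi*((k + k' : ℤ))*x) := by
    intro x; rw [cos_mul_cos']; push_cast; ring_nf
  rw [intervalIntegral.integral_congr (fun x _ => key x)]
  rw [intervalIntegral.integral_add ((cont_osc _ _).const_mul _) ((cont_osc _ _).const_mul _),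
    intervalIntegral.integral_const_mul, intervalIntegral.integral_const_mul,
    osc _ _ h1, osc _ _ h2]
  ring

lemma int_h2 (α α' : ℝ) (k k' : ℤ) (h1 : 2*k - 2*k' ≠ 0) (h2 : 2*k + 2*k' ≠ 0)
    (h3 : (2*k : ℤ) ≠ 0) (h4 : (2*k' : ℤ) ≠ 0) :
    ∫ x in (0:ℝ)..1, (Real.cos (α + 2*Real.pi*k*x) * Real.cos (α' + 2*Real.pi*k'*x))^2
      = 1/4 := by
  have key : ∀ x : ℝ, (Real.cos (α + 2*Real.pi*k*x) * Real.cos (α' + 2*Real.pi*k'*x))^2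
      = 1/4 + (1/4) * Real.cos (2*α + 2*Real.pi*((2*k : ℤ))*x)
        + (1/4) * Real.cos (2*α' + 2*Real.pi*((2*k' : ℤ))*x)
        + ((1/8) * Real.cos ((2*α - 2*α') + 2*Real.pi*((2*k - 2*k' : ℤ))*x)
          + (1/8) * Real.cos ((2*α + 2*α') + 2*Real.pi*((2*k + 2*k' : ℤ))*x)) := by
    intro x
    have gen : ∀ A B : ℝ, (Real.cos A * Real.cos B)^2
        = 1/4 + (1/4) * Real.cos (2*A) + (1/4) * Real.cos (2*B)
          + ((1/8) * Real.cos (2*A - 2*B) + (1/8) * Real.cos (2*A + 2*B)) := by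
      intro A B
      rw [mul_pow, Real.cos_sq, Real.cos_sq]
      linear_combination (cos_mul_cos' (2*A) (2*B)) / 4
    rw [gen]
    push_cast; ring_nf
  rw [intervalIntegral.integral_congr (fun x _ => key x)]
  have i1 := (cont_osc (2*α) (2*k)).const_mul (1/4 : ℝ)
  have i2 := (cont_osc (2*α') (2*k')).const_mul (1/4 : ℝ)
  have i3 := (cont_osc (2*α - 2*α') (2*k - 2*k')).const_mul (1/8 : ℝ)
  have i4 := (cont_osc (2*α + 2*α') (2*k + 2*k')).const_mul (1/8 : ℝ)
  have ic : IntervalIntegrable (fun _ : ℝ => (1/4 : ℝ)) MeasureTheory.volume 0 1 :=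
    intervalIntegrable_const
  rw [intervalIntegral.integral_add ((ic.add i1).add i2) (i3.add i4),
    intervalIntegral.integral_add (ic.add i1) i2,
    intervalIntegral.integral_add ic i1,
    intervalIntegral.integral_add i3 i4,
    intervalIntegral.integral_const_mul, intervalIntegral.integral_const_mul,
    intervalIntegral.integral_const_mul, intervalIntegral.integral_const_mul,
    osc _ _ h3, osc _ _ h4, osc _ _ h1, osc _ _ h2]
  simp

/-- For distinct positive integers `n ≠ n'` and any phases `α, α'`, the set of `x ∈ [0,1]`
where `cos(α + 2πnx)·cos(α' + 2πn'x) < 0` has Lebesgue measure at least `1/8`. -/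
theorem stmt17 (α α' : ℝ) (n n' : ℕ) (hn : 0 < n) (hn' : 0 < n') (hne : n ≠ n') :
    (1 : ENNReal) / 8 ≤
      MeasureTheory.volume
        {x : ℝ | x ∈ Set.Icc (0 : ℝ) 1 ∧
          Real.cos (α + 2 * Real.pi * n * x) * Real.cos (α' + 2 * Real.pi * n' * x) < 0} := by
  set h : ℝ → ℝ := fun x =>
    Real.cos (α + 2 * Real.pi * n * x) * Real.cos (α' + 2 * Real.pi * n' * x) with hh
  have hc : Continuous h := by fun_prop
  have hzne : ((n:ℤ)) ≠ (n':ℤ) := by exact_mod_cast hne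
  -- first moment
  have hI0 : ∫ x in (0:ℝ)..1, h x = 0 := by
    have := int_h α α' n n' (by omega) (by omega)
    simpa [hh] using this
  -- second moment
  have hI2 : ∫ x in (0:ℝ)..1, (h x)^2 = 1/4 := by
    have := int_h2 α α' n n' (by omega) (by omega) (by omega) (by omega)
    simpa [hh] using this
  -- pointwise bounds
  have habs1 : ∀ x, |h x| ≤ 1 := by
    intro x
    rw [hh, abs_mul]
    exact mul_le_one₀ (Real.abs_cos_le_one _) (abs_nonneg _) (Real.abs_cos_le_one _)
  have hsqle : ∀ x, (h x)^2 ≤ |h x| := by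
    intro x
    calc (h x)^2 = |h x| * |h x| := by rw [← sq_abs, sq]
    _ ≤ |h x| * 1 := mul_le_mul_of_nonneg_left (habs1 x) (abs_nonneg _)
    _ = |h x| := mul_one _
  have ih2 : IntervalIntegrable (fun x => (h x)^2) volume 0 1 :=
    (hc.pow 2).intervalIntegrable 0 1
  have iha : IntervalIntegrable (fun x => |h x|) volume 0 1 :=
    hc.abs.intervalIntegrable 0 1
  have ih : IntervalIntegrable h volume 0 1 := hc.intervalIntegrable 0 1
  have hIa : (1:ℝ)/4 ≤ ∫ x in (0:ℝ)..1, |h x| := by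
    rw [← hI2]
    exact intervalIntegral.integral_mono_on zero_le_one ih2 iha fun x _ => hsqle x
  -- the negative part
  set g : ℝ → ℝ := fun x => -(min (h x) 0) with hg
  have hgid : ∀ x, g x = (1/2) * |h x| - (1/2) * h x := by
    intro x
    rcases le_or_gt (h x) 0 with h0 | h0
    · simp [hg, min_eq_left h0, abs_of_nonpos h0]; ring
    · simp [hg, min_eq_right h0.le, abs_of_pos h0]
  have hIg : (1:ℝ)/8 ≤ ∫ x in (0:ℝ)..1, g x := by
    rw [intervalIntegral.integral_congr (g := fun x => (1/2) * |h x| - (1/2) * h x)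
      (fun x _ => hgid x),
      intervalIntegral.integral_sub (iha.const_mul _) (ih.const_mul _),
      intervalIntegral.integral_const_mul, intervalIntegral.integral_const_mul, hI0]
    linarith [hIa]
  -- compare with indicator of the negativity set
  set T : Set ℝ := {x | h x < 0} with hT
  have hTm : MeasurableSet T := measurableSet_lt hc.measurable measurable_const
  have hind : ∫ x in Set.Ioc (0:ℝ) 1, g x
      ≤ ∫ x in Set.Ioc (0:ℝ) 1, T.indicator (fun _ => (1:ℝ)) x := by
    refine MeasureTheory.setIntegral_mono_on ?_ ?_ measurableSet_Ioc ?_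
    · exact ((hc.min continuous_const).neg).integrableOn_Ioc
    · exact ((MeasureTheory.integrableOn_const (C := (1:ℝ)) measure_Ioc_lt_top.ne).indicator hTm)
    · intro x _
      rcases lt_or_ge (h x) 0 with h0 | h0
      · have : x ∈ T := h0
        rw [Set.indicator_of_mem this]
        have : g x = |h x| := by rw [hgid x, abs_of_neg h0]; ring
        rw [this]; exact habs1 x
      · have : g x = 0 := by simp [hg, min_eq_right h0]
        rw [this]
        exact Set.indicator_nonneg (fun _ _ => zero_le_one) x
  have hindval : ∫ x in Set.Ioc (0:ℝ) 1, T.indicator (fun _ => (1:ℝ)) x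
      = (volume (Set.Ioc (0:ℝ) 1 ∩ T)).toReal := by
    rw [MeasureTheory.setIntegral_indicator hTm, MeasureTheory.setIntegral_const]
    simp [Measure.real]
  have hgint : ∫ x in (0:ℝ)..1, g x = ∫ x in Set.Ioc (0:ℝ) 1, g x :=
    intervalIntegral.integral_of_le zero_le_one
  have hmain : (1:ℝ)/8 ≤ (volume (Set.Ioc (0:ℝ) 1 ∩ T)).toReal := by
    rw [← hindval]
    exact le_trans (hgint ▸ hIg) hind
  have hsub : Set.Ioc (0:ℝ) 1 ∩ T ⊆
      {x : ℝ | x ∈ Set.Icc (0 : ℝ) 1 ∧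
        Real.cos (α + 2 * Real.pi * n * x) * Real.cos (α' + 2 * Real.pi * n' * x) < 0} :=
    fun x hx => ⟨Set.Ioc_subset_Icc_self hx.1, hx.2⟩
  have hfin : volume (Set.Ioc (0:ℝ) 1 ∩ T) ≠ ⊤ :=
    (lt_of_le_of_lt (measure_mono Set.inter_subset_left) measure_Ioc_lt_top).ne
  calc (1:ENNReal)/8 = ENNReal.ofReal (1/8) := by
        rw [ENNReal.ofReal_div_of_pos (by norm_num)]; norm_num
    _ ≤ ENNReal.ofReal ((volume (Set.Ioc (0:ℝ) 1 ∩ T)).toReal) :=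
        ENNReal.ofReal_le_ofReal hmain
    _ = volume (Set.Ioc (0:ℝ) 1 ∩ T) := ENNReal.ofReal_toReal hfin
    _ ≤ _ := measure_mono hsub
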